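/- arXiv:1012.3107 — 2 statements merged into one kernel-verified Lean document; each statement's English description precedes it below -/
import Mathlib

section
/- For every r > 0 and every z : Fin 4 → ℂ with Σᵢ zᵢ² = 0 and Σᵢ |zᵢ|² = r², there exists a real orthogonal 4×4 matrix A with det A = 1 such that z = A·(r/√2, i·r/√2, 0, 0) (complexified matrix–vector multiplication). In other words, SO(4) acts transitively on each radius-r slice of the punctured singular conifold Q₀ ∖ {0}, so the map φ₀ of the cone description of Q₀ is surjective onto Q₀ ∖ {0}. -/
/-- The base point of the cone description of the singular conifold. -/
noncomputable def conePoint (r : ℝ) : Fin 4 → ℂ :=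
  ![Complex.ofReal (r / Real.sqrt 2), Complex.I * Complex.ofReal (r / Real.sqrt 2), 0, 0]

/-- `SO(4)` acts transitively on each radius-`r` slice of the punctured singular conifold
`Q₀ ∖ {0}`: every `z ∈ ℂ⁴` with `∑ zᵢ² = 0` and `∑ |zᵢ|² = r²` is of the form
`A·(r/√2, i·r/√2, 0, 0)` for some real orthogonal `A` with `det A = 1`. -/
theorem so4_transitive_on_conifold_slices (r : ℝ) (hr : 0 < r) (z : Fin 4 → ℂ)
    (h1 : ∑ i, (z i) ^ 2 = 0) (h2 : ∑ i, ‖z i‖ ^ 2 = r ^ 2) :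
    ∃ A : Matrix (Fin 4) (Fin 4) ℝ, A.transpose * A = 1 ∧ A.det = 1 ∧
      z = (A.map Complex.ofReal).mulVec (conePoint r) := by
  have hr0 : r ≠ 0 := ne_of_gt hr
  have hs2 : (0:ℝ) < Real.sqrt 2 := Real.sqrt_pos.mpr (by norm_num)
  set x : Fin 4 → ℝ := fun j => (z j).re with hxdef
  set y : Fin 4 → ℝ := fun j => (z j).im with hydef
  have hre : ∑ j, (x j * x j - y j * y j) = 0 := by
    have := congrArg Complex.re h1
    simpa [Complex.re_sum, pow_two, Complex.mul_re] using this
  have him : ∑ j, (x j * y j) = 0 := by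
    have := congrArg Complex.im h1
    have h' : ∑ j, (x j * y j + y j * x j) = 0 := by
      simpa [Complex.im_sum, pow_two, Complex.mul_im] using this
    have h2' : (2:ℝ) * ∑ j, x j * y j = 0 := by
      rw [Finset.mul_sum]; rw [← h']; congr 1; ext j; ring
    linarith
  have habs : ∑ j, (x j * x j + y j * y j) = r ^ 2 := by
    rw [← h2]; refine Finset.sum_congr rfl (fun j _ => ?_)
    rw [← Complex.normSq_eq_norm_sq, Complex.normSq_apply]
  have hsub : (∑ j, x j * x j) - (∑ j, y j * y j) = 0 := by
    rw [← Finset.sum_sub_distrib]; exact hre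
  have hadd : (∑ j, x j * x j) + (∑ j, y j * y j) = r ^ 2 := by
    rw [← Finset.sum_add_distrib]; exact habs
  have hx2 : ∑ j, x j * x j = r ^ 2 / 2 := by linarith
  have hy2 : ∑ j, y j * y j = r ^ 2 / 2 := by linarith
  -- normalized vectors in EuclideanSpace
  set c : ℝ := Real.sqrt 2 / r with hcdef
  have hc0 : c ≠ 0 := div_ne_zero (ne_of_gt hs2) hr0
  have hcc : c * c = 2 / r ^ 2 := by
    rw [hcdef, div_mul_div_comm, Real.mul_self_sqrt (by norm_num)]
    ring_nf
  set w1 : EuclideanSpace ℝ (Fin 4) := WithLp.toLp 2 (fun j => c * x j) with hw1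
  set w2 : EuclideanSpace ℝ (Fin 4) := WithLp.toLp 2 (fun j => c * y j) with hw2
  set v : Fin 4 → EuclideanSpace ℝ (Fin 4) := ![w1, w2, 0, 0] with hv
  have hw1w1 : ∑ j, w1 j * w1 j = 1 := by
    have : ∑ j, w1 j * w1 j = (c * c) * ∑ j, x j * x j := by
      rw [Finset.mul_sum]; congr 1; ext j; simp [hw1]; ring
    rw [this, hcc, hx2]
    field_simp
  have hw2w2 : ∑ j, w2 j * w2 j = 1 := by
    have : ∑ j, w2 j * w2 j = (c * c) * ∑ j, y j * y j := by
      rw [Finset.mul_sum]; congr 1; ext j; simp [hw2]; ring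
    rw [this, hcc, hy2]
    field_simp
  have hw1w2 : ∑ j, w1 j * w2 j = 0 := by
    have : ∑ j, w1 j * w2 j = (c * c) * ∑ j, x j * y j := by
      rw [Finset.mul_sum]; congr 1; ext j; simp [hw1, hw2]; ring
    rw [this, him, mul_zero]
  have hon : Orthonormal ℝ (({0, 1} : Set (Fin 4)).restrict v) := by
    rw [orthonormal_iff_ite]
    rintro ⟨i, hi⟩ ⟨j, hj⟩
    have hij : ∀ a b : Fin 4, a ∈ ({0,1} : Set (Fin 4)) → b ∈ ({0,1} : Set (Fin 4)) →
        (inner ℝ (v a) (v b) : ℝ) = if a = b then 1 else 0 := by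
      rintro a b (rfl | rfl) (rfl | rfl) <;> rw [PiLp.inner_apply] <;>
        simp [hv, PiLp.inner_apply, hw1w1, hw2w2, hw1w2, mul_comm, Finset.sum_comm,
          (by simpa [pow_two] using hw1w1 : ∑ j, w1 j ^ 2 = 1),
          (by simpa [pow_two] using hw2w2 : ∑ j, w2 j ^ 2 = 1)] <;>
        simpa [mul_comm] using hw1w2
    have := hij i j hi hj
    simpa [Set.restrict, Subtype.ext_iff] using this
  obtain ⟨b, hb⟩ := hon.exists_orthonormalBasis_extension_of_card_eq
    (by simp) 
  have hb0 : b 0 = w1 := by simpa [hv] using hb 0 (by simp)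
  have hb1 : b 1 = w2 := by simpa [hv] using hb 1 (by simp)
  -- matrix with columns b k
  set A0 : Matrix (Fin 4) (Fin 4) ℝ := fun j k => b k j with hA0
  have horth : A0.transpose * A0 = 1 := by
    ext k l
    have := b.orthonormal
    rw [orthonormal_iff_ite] at this
    have h := this k l
    simp [PiLp.inner_apply] at h
    simp only [Matrix.mul_apply, Matrix.transpose_apply, hA0, Matrix.one_apply]
    rw [← h]; show ∑ x, (b k).ofLp x * (b l).ofLp x = _; exact Finset.sum_congr rfl (fun _ _ => mul_comm _ _)
  have hdet2 : A0.det * A0.det = 1 := by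
    have := congrArg Matrix.det horth
    simpa [Matrix.det_mul, Matrix.det_transpose, mul_comm] using this
  set D : Matrix (Fin 4) (Fin 4) ℝ := Matrix.diagonal ![1, 1, 1, A0.det] with hD
  refine ⟨A0 * D, ?_, ?_, ?_⟩
  · rw [Matrix.transpose_mul]
    have : D.transpose * A0.transpose * (A0 * D) = D.transpose * (A0.transpose * A0) * D := by
      noncomm_ring
    rw [this, horth, mul_one]
    rw [hD, Matrix.diagonal_transpose, Matrix.diagonal_mul_diagonal]
    ext i j
    fin_cases i <;> fin_cases j <;>
      simp [Matrix.diagonal, Matrix.one_apply, hdet2]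
  · rw [Matrix.det_mul, hD, Matrix.det_diagonal]
    simp [Fin.prod_univ_four]
    exact hdet2
  · -- z = (A0*D).map ... mulVec conePoint r
    have hDc : ((A0 * D).map Complex.ofReal).mulVec (conePoint r)
        = (A0.map Complex.ofReal).mulVec (conePoint r) := by
      have hmm : (A0 * D).map Complex.ofReal
          = (A0.map Complex.ofReal) * (D.map Complex.ofReal) := by
        ext i j
        simp only [Matrix.mul_apply, Matrix.map_apply, Fin.sum_univ_four]
        push_cast
        rfl
      have hDv : (D.map Complex.ofReal).mulVec (conePoint r) = conePoint r := by
        funext j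
        fin_cases j <;>
          simp [hD, Matrix.mulVec, dotProduct, Fin.sum_univ_four, Matrix.map_apply,
            Matrix.diagonal, conePoint]
      rw [hmm, ← Matrix.mulVec_mulVec, hDv]
    rw [hDc]
    funext j
    rw [Matrix.mulVec]
    simp only [dotProduct, Fin.sum_univ_four, Matrix.map_apply, conePoint]
    simp only [Matrix.cons_val_zero, Matrix.cons_val_one, Matrix.head_cons,
      Matrix.cons_val_two, Matrix.cons_val_three, Matrix.tail_cons, mul_zero, add_zero]
    have e0 : A0 j 0 = c * x j := by show b 0 j = c * x j; rw [hb0, hw1]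
    have e1 : A0 j 1 = c * y j := by show b 1 j = c * y j; rw [hb1, hw2]
    rw [e0, e1]
    have hcr : (c : ℂ) * ((r : ℂ) / (Real.sqrt 2 : ℂ)) = 1 := by
      rw [hcdef]
      push_cast
      field_simp
      exact div_self (by exact_mod_cast hr0)
    have hz : z j = ((x j : ℝ) : ℂ) + ((y j : ℝ) : ℂ) * Complex.I :=
      (Complex.re_add_im (z j)).symm
    rw [hz]
    push_cast
    linear_combination (-(x j : ℂ) - (y j : ℂ) * Complex.I) * hcr
end

section
/- For every s > 0, lim_{t → 0⁺} 2^{−1/3} · t^{2/3} · ∫₀^{arcosh(s/t)} (sinh(2τ) − 2τ)^{1/3} dτ = (3/2) · s^{2/3}, where t ranges over real numbers in (0, s] and arcosh(x) = log(x + √(x² − 1)) for x ≥ 1. -/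
open Real hiding arcosh arcosh_nonneg
open Filter Set

/-- The inverse hyperbolic cosine, `arcosh x = log (x + √(x² − 1))`. -/
noncomputable def arcosh (x : ℝ) : ℝ := Real.log (x + Real.sqrt (x ^ 2 - 1))

namespace COPotentialAux

/-- The integrand of the Candelas–de la Ossa potential. -/
noncomputable def ff (τ : ℝ) : ℝ := (Real.sinh (2 * τ) - 2 * τ) ^ ((1:ℝ)/3)

lemma ff_cont : Continuous ff := by
  unfold ff
  apply Continuous.rpow_const
  · fun_prop
  · intro x; exact Or.inr (by norm_num)

lemma sinh_sub_nonneg {τ : ℝ} (hτ : 0 ≤ τ) : 0 ≤ Real.sinh (2*τ) - 2*τ :=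
  sub_nonneg.2 (Real.self_le_sinh_iff.2 (by linarith))

lemma sinh_sub_ub {τ : ℝ} (hτ : 0 ≤ τ) : Real.sinh (2*τ) - 2*τ ≤ Real.exp (2*τ) / 2 := by
  rw [Real.sinh_eq]
  have := Real.exp_pos (-(2*τ))
  linarith

lemma integral_exp23 (a b : ℝ) :
    ∫ τ in a..b, Real.exp ((2/3) * τ) = (3/2) * (Real.exp ((2/3)*b) - Real.exp ((2/3)*a)) := by
  rw [intervalIntegral.integral_eq_sub_of_hasDerivAt
      (f := fun τ => (3/2) * Real.exp ((2/3)*τ)) ?_ ?_]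
  · ring
  · intro x _
    have h1 : HasDerivAt (fun τ : ℝ => (2/3) * τ) (2/3) x := by
      simpa using (hasDerivAt_id x).const_mul (2/3:ℝ)
    have h2 := (Real.hasDerivAt_exp ((2/3)*x)).comp x h1
    have h3 := h2.const_mul (3/2 : ℝ)
    exact h3.congr_deriv (by ring)
  · exact (Real.continuous_exp.comp (continuous_const.mul continuous_id)).intervalIntegrable a b

lemma half_rpow (τ : ℝ) :
    (Real.exp (2*τ) / 2) ^ ((1:ℝ)/3) = 2 ^ (-(1:ℝ)/3) * Real.exp ((2/3) * τ) := by
  have h1 : (2:ℝ) ^ (-(1:ℝ)/3) = ((2:ℝ) ^ ((1:ℝ)/3))⁻¹ := by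
    rw [show -(1:ℝ)/3 = -(1/3) by norm_num, Real.rpow_neg (by norm_num)]
  rw [Real.div_rpow (Real.exp_nonneg _) (by norm_num), ← Real.exp_mul, h1,
    div_eq_mul_inv, mul_comm]
  congr 1
  ring

lemma two_rpow_combine : (2:ℝ)^(-(1:ℝ)/3) * (2:ℝ)^(-(1:ℝ)/3) = (2:ℝ)^(-(2:ℝ)/3) := by
  rw [← Real.rpow_add (by norm_num : (0:ℝ) < 2)]
  norm_num

lemma two_rpow_cancel : (2:ℝ)^(-(2:ℝ)/3) * (2:ℝ)^((2:ℝ)/3) = 1 := by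
  rw [← Real.rpow_add (by norm_num : (0:ℝ) < 2)]
  norm_num

lemma int_upper {R : ℝ} (hR : 0 ≤ R) :
    ∫ τ in (0:ℝ)..R, ff τ ≤ 2 ^ (-(1:ℝ)/3) * ((3/2) * (Real.exp ((2/3)*R) - 1)) := by
  have hmono : ∫ τ in (0:ℝ)..R, ff τ
      ≤ ∫ τ in (0:ℝ)..R, 2 ^ (-(1:ℝ)/3) * Real.exp ((2/3)*τ) := by
    apply intervalIntegral.integral_mono_on hR (ff_cont.intervalIntegrable _ _)
      ((continuous_const.mul (Real.continuous_exp.comp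
        (continuous_const.mul continuous_id))).intervalIntegrable _ _)
    intro x hx
    calc ff x ≤ (Real.exp (2*x)/2) ^ ((1:ℝ)/3) :=
          Real.rpow_le_rpow (sinh_sub_nonneg hx.1) (sinh_sub_ub hx.1) (by norm_num)
      _ = 2 ^ (-(1:ℝ)/3) * Real.exp ((2/3)*x) := half_rpow x
  rw [intervalIntegral.integral_const_mul, integral_exp23] at hmono
  simpa using hmono

lemma cube_rpow {η : ℝ} (hη : 0 ≤ η) : (η^3 : ℝ) ^ ((1:ℝ)/3) = η := by
  rw [← Real.rpow_natCast η 3, ← Real.rpow_mul hη]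
  norm_num

lemma int_lower {η T R : ℝ} (hη : 0 ≤ η) (hT : 0 ≤ T) (hTR : T ≤ R)
    (hpt : ∀ τ, T ≤ τ → η^3 * (Real.exp (2*τ)/2) ≤ Real.sinh (2*τ) - 2*τ) :
    η * 2 ^ (-(1:ℝ)/3) * ((3/2) * (Real.exp ((2/3)*R) - Real.exp ((2/3)*T)))
      ≤ ∫ τ in (0:ℝ)..R, ff τ := by
  have hsplit : ∫ τ in (0:ℝ)..R, ff τ = (∫ τ in (0:ℝ)..T, ff τ) + ∫ τ in T..R, ff τ :=
    (intervalIntegral.integral_add_adjacent_intervals (ff_cont.intervalIntegrable _ _)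
      (ff_cont.intervalIntegrable _ _)).symm
  have h0 : 0 ≤ ∫ τ in (0:ℝ)..T, ff τ := by
    apply intervalIntegral.integral_nonneg hT
    intro x hx
    exact Real.rpow_nonneg (sinh_sub_nonneg hx.1) _
  have h1 : ∫ τ in T..R, (η * 2 ^ (-(1:ℝ)/3)) * Real.exp ((2/3)*τ) ≤ ∫ τ in T..R, ff τ := by
    apply intervalIntegral.integral_mono_on hTR
      ((continuous_const.mul (Real.continuous_exp.comp
        (continuous_const.mul continuous_id))).intervalIntegrable _ _)
      (ff_cont.intervalIntegrable _ _)
    intro x hx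
    calc (η * 2 ^ (-(1:ℝ)/3)) * Real.exp ((2/3)*x)
        = (η^3 * (Real.exp (2*x)/2)) ^ ((1:ℝ)/3) := by
          rw [Real.mul_rpow (by positivity) (by positivity), cube_rpow hη, half_rpow, mul_assoc]
      _ ≤ ff x := Real.rpow_le_rpow (by positivity) (hpt x hx.1) (by norm_num)
  rw [intervalIntegral.integral_const_mul, integral_exp23] at h1
  rw [hsplit]
  nlinarith [h1, h0]

lemma arcosh_nonneg {x : ℝ} (hx : 1 ≤ x) : 0 ≤ arcosh x :=
  Real.log_nonneg (le_add_of_le_of_nonneg hx (Real.sqrt_nonneg _))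

lemma log_le_arcosh {x : ℝ} (hx : 1 ≤ x) : Real.log x ≤ arcosh x :=
  Real.log_le_log (by linarith) (le_add_of_nonneg_right (Real.sqrt_nonneg _))

lemma key_id {s t : ℝ} (ht : 0 < t) (hts : t ≤ s) :
    t * Real.exp (arcosh (s/t)) = s + Real.sqrt (s^2 - t^2) := by
  have hx : 1 ≤ s / t := (one_le_div ht).2 hts
  have hpos : 0 < s/t + Real.sqrt ((s/t)^2 - 1) :=
    lt_of_lt_of_le one_pos (le_add_of_le_of_nonneg hx (Real.sqrt_nonneg _))
  rw [arcosh, Real.exp_log hpos, mul_add, mul_div_cancel₀ _ ht.ne']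
  congr 1
  rw [← Real.sqrt_sq ht.le, ← Real.sqrt_mul (sq_nonneg t)]
  congr 1
  field_simp
  rw [Real.sq_sqrt (sq_nonneg t)]

lemma t_exp_rpow {s t : ℝ} (ht : 0 < t) (hts : t ≤ s) :
    t ^ ((2:ℝ)/3) * Real.exp ((2/3) * arcosh (s/t)) = (s + Real.sqrt (s^2 - t^2)) ^ ((2:ℝ)/3) := by
  rw [mul_comm (2/3 : ℝ), Real.exp_mul, ← Real.mul_rpow ht.le (Real.exp_nonneg _), key_id ht hts]

lemma tendsto_arcosh {s : ℝ} (hs : 0 < s) :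
    Tendsto (fun t => arcosh (s/t)) (nhdsWithin 0 (Ioc 0 s)) atTop := by
  have h1 : Tendsto (fun t : ℝ => s / t) (nhdsWithin 0 (Ioc 0 s)) atTop := by
    have h0 : Tendsto (fun t : ℝ => t⁻¹) (nhdsWithin 0 (Ioc 0 s)) atTop :=
      tendsto_inv_nhdsGT_zero.mono_left (nhdsWithin_mono _ Ioc_subset_Ioi_self)
    have := h0.const_mul_atTop hs
    simpa [div_eq_mul_inv] using this
  apply tendsto_atTop_mono' _ _ (Real.tendsto_log_atTop.comp h1)
  filter_upwards [h1.eventually (eventually_ge_atTop 1)] with t ht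
  exact log_le_arcosh ht

lemma tendsto_aux_zero :
    Tendsto (fun τ : ℝ => (Real.exp (-(2*τ))/2 + 2*τ) * Real.exp (-(2*τ))) atTop (nhds 0) := by
  have h2 : Tendsto (fun τ : ℝ => 2*τ) atTop atTop :=
    tendsto_id.const_mul_atTop (by norm_num)
  have e1 : Tendsto (fun τ : ℝ => Real.exp (-(4*τ))) atTop (nhds 0) := by
    have h4 : Tendsto (fun τ : ℝ => 4*τ) atTop atTop :=
      tendsto_id.const_mul_atTop (by norm_num)
    exact Real.tendsto_exp_atBot.comp (tendsto_neg_atTop_atBot.comp h4)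
  have e2 : Tendsto (fun τ : ℝ => (2*τ) * Real.exp (-(2*τ))) atTop (nhds 0) := by
    have := (tendsto_pow_mul_exp_neg_atTop_nhds_zero 1).comp h2
    simpa [Function.comp_def] using this
  have hsum := (e1.div_const 2).add e2
  rw [zero_div, zero_add] at hsum
  apply hsum.congr
  intro τ
  rw [show -(4*τ) = -(2*τ) + -(2*τ) by ring, Real.exp_add]
  ring

lemma pointwise_lower {η τ : ℝ}
    (h1 : (Real.exp (-(2*τ))/2 + 2*τ) * Real.exp (-(2*τ)) < (1 - η^3)/2) :
    η^3 * (Real.exp (2*τ)/2) ≤ Real.sinh (2*τ) - 2*τ := by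
  have hepos : 0 < Real.exp (2*τ) := Real.exp_pos _
  have hid : Real.exp (-(2*τ)) * Real.exp (2*τ) = 1 := by
    rw [← Real.exp_add]; simp
  have h3 : (Real.exp (-(2*τ))/2 + 2*τ) * Real.exp (-(2*τ)) * Real.exp (2*τ)
      = Real.exp (-(2*τ))/2 + 2*τ := by
    rw [mul_assoc, hid, mul_one]
  have h2 := mul_lt_mul_of_pos_right h1 hepos
  rw [h3] at h2
  rw [Real.sinh_eq]
  nlinarith [h2, Real.exp_pos (-(2*τ))]

end COPotentialAux

open COPotentialAux in
/-- Pointwise convergence of the Candelas–de la Ossa Kähler potentials as the conifold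
degenerates: for every `s > 0`,
`lim_{t → 0⁺} 2^{−1/3}·t^{2/3}·∫₀^{arcosh(s/t)} (sinh(2τ) − 2τ)^{1/3} dτ = (3/2)·s^{2/3}`,
where `t` ranges over `(0, s]`. -/
theorem CO_potential_tendsto_cone_potential (s : ℝ) (hs : 0 < s) :
    Filter.Tendsto
      (fun t : ℝ =>
        (2 : ℝ) ^ (-(1 : ℝ) / 3) * t ^ ((2 : ℝ) / 3) *
          ∫ τ in (0 : ℝ)..(arcosh (s / t)), (Real.sinh (2 * τ) - 2 * τ) ^ ((1 : ℝ) / 3))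
      (nhdsWithin 0 (Set.Ioc 0 s)) (nhds ((3 / 2) * s ^ ((2 : ℝ) / 3))) := by
  have hL : (0:ℝ) < (3/2) * s ^ ((2:ℝ)/3) := by positivity
  have hub : ∀ t ∈ Ioc (0:ℝ) s,
      (2:ℝ)^(-(1:ℝ)/3) * t^((2:ℝ)/3) * (∫ τ in (0:ℝ)..(arcosh (s/t)), ff τ)
        ≤ (3/2) * s^((2:ℝ)/3) := by
    rintro t ⟨ht0, hts⟩
    have hx : 1 ≤ s/t := (one_le_div ht0).2 hts
    have hR0 : 0 ≤ arcosh (s/t) := arcosh_nonneg hx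
    have ht23 : (0:ℝ) ≤ t ^ ((2:ℝ)/3) := Real.rpow_nonneg ht0.le _
    have h2pos : (0:ℝ) ≤ (2:ℝ)^(-(1:ℝ)/3) := (Real.rpow_pos_of_pos two_pos _).le
    calc (2:ℝ)^(-(1:ℝ)/3) * t^((2:ℝ)/3) * (∫ τ in (0:ℝ)..(arcosh (s/t)), ff τ)
        ≤ (2:ℝ)^(-(1:ℝ)/3) * t^((2:ℝ)/3) *
            ((2:ℝ)^(-(1:ℝ)/3) * ((3/2) * (Real.exp ((2/3) * arcosh (s/t)) - 1))) :=
          mul_le_mul_of_nonneg_left (int_upper hR0) (mul_nonneg h2pos ht23)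
      _ ≤ (2:ℝ)^(-(1:ℝ)/3) * t^((2:ℝ)/3) *
            ((2:ℝ)^(-(1:ℝ)/3) * ((3/2) * Real.exp ((2/3) * arcosh (s/t)))) := by
          apply mul_le_mul_of_nonneg_left _ (mul_nonneg h2pos ht23)
          apply mul_le_mul_of_nonneg_left _ h2pos
          have := Real.exp_pos ((2/3) * arcosh (s/t))
          linarith
      _ = (3/2) * ((2:ℝ)^(-(1:ℝ)/3) * (2:ℝ)^(-(1:ℝ)/3)) *
            (t^((2:ℝ)/3) * Real.exp ((2/3) * arcosh (s/t))) := by ring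
      _ = (3/2) * (2:ℝ)^(-(2:ℝ)/3) * ((s + Real.sqrt (s^2 - t^2)) ^ ((2:ℝ)/3)) := by
          rw [two_rpow_combine, t_exp_rpow ht0 hts]
      _ ≤ (3/2) * (2:ℝ)^(-(2:ℝ)/3) * ((2*s) ^ ((2:ℝ)/3)) := by
          have hsq : Real.sqrt (s^2 - t^2) ≤ s := by
            calc Real.sqrt (s^2 - t^2) ≤ Real.sqrt (s^2) := Real.sqrt_le_sqrt (by nlinarith)
              _ = s := Real.sqrt_sq hs.le
          have hbase : (0:ℝ) ≤ s + Real.sqrt (s^2-t^2) :=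
            le_add_of_le_of_nonneg hs.le (Real.sqrt_nonneg _)
          exact mul_le_mul_of_nonneg_left
            (Real.rpow_le_rpow hbase (by linarith) (by norm_num))
            (mul_nonneg (by norm_num) (Real.rpow_pos_of_pos two_pos _).le)
      _ = (3/2) * s ^ ((2:ℝ)/3) := by
          rw [Real.mul_rpow (by norm_num) hs.le]
          calc (3/2) * (2:ℝ)^(-(2:ℝ)/3) * ((2:ℝ)^((2:ℝ)/3) * s^((2:ℝ)/3))
              = (3/2) * (((2:ℝ)^(-(2:ℝ)/3) * (2:ℝ)^((2:ℝ)/3)) * s^((2:ℝ)/3)) := by ring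
            _ = (3/2) * s^((2:ℝ)/3) := by rw [two_rpow_cancel, one_mul]
  rw [tendsto_order]
  constructor
  · -- lower bound
    intro a ha
    have hal : a / ((3/2) * s ^ ((2:ℝ)/3)) < 1 := (div_lt_one hL).2 ha
    set η : ℝ := max (1/2) ((a / ((3/2) * s ^ ((2:ℝ)/3)) + 1)/2) with hηdef
    have hη0 : 0 < η := lt_of_lt_of_le (by norm_num) (le_max_left _ _)
    have hη1 : η < 1 := max_lt (by norm_num) (by linarith)
    have haη : a < η * ((3/2) * s ^ ((2:ℝ)/3)) := by
      have h' : a / ((3/2) * s ^ ((2:ℝ)/3)) < η :=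
        lt_of_lt_of_le (by linarith) (le_max_right _ _)
      have := mul_lt_mul_of_pos_right h' hL
      rwa [div_mul_cancel₀ _ hL.ne'] at this
    have hε : 0 < (1 - η^3)/2 := by
      have : η^3 < 1 := pow_lt_one₀ hη0.le hη1 (by norm_num)
      linarith
    obtain ⟨T₀, hT₀⟩ := eventually_atTop.1 (tendsto_aux_zero.eventually_lt_const hε)
    set T := max T₀ 0 with hTdef
    have hT0 : 0 ≤ T := le_max_right _ _
    have hTpt : ∀ τ, T ≤ τ → η^3 * (Real.exp (2*τ)/2) ≤ Real.sinh (2*τ) - 2*τ :=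
      fun τ hτ => pointwise_lower (hT₀ τ (le_trans (le_max_left _ _) hτ))
    set C := Real.exp ((2/3)*T) with hCdef
    set G : ℝ → ℝ := fun t =>
      η * (3/2) * (2:ℝ)^(-(2:ℝ)/3) *
        ((s + Real.sqrt (s^2 - t^2)) ^ ((2:ℝ)/3) - t ^ ((2:ℝ)/3) * C) with hGdef
    have c1 : Continuous (fun t : ℝ => (s + Real.sqrt (s^2 - t^2)) ^ ((2:ℝ)/3)) := by
      apply Continuous.rpow_const
      · fun_prop
      · intro x; exact Or.inr (by norm_num)
    have c2 : Continuous (fun t : ℝ => t ^ ((2:ℝ)/3)) := by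
      rw [continuous_iff_continuousAt]
      intro x
      exact Real.continuousAt_rpow_const _ _ (Or.inr (by norm_num))
    have cG : Continuous G := continuous_const.mul (c1.sub (c2.mul continuous_const))
    have hG0 : G 0 = η * ((3/2) * s ^ ((2:ℝ)/3)) := by
      show η * (3/2) * (2:ℝ)^(-(2:ℝ)/3) *
        ((s + Real.sqrt (s^2 - 0^2)) ^ ((2:ℝ)/3) - (0:ℝ) ^ ((2:ℝ)/3) * C) = _
      rw [show s^2 - (0:ℝ)^2 = s^2 by ring, Real.sqrt_sq hs.le,
        Real.zero_rpow (by norm_num : ((2:ℝ)/3) ≠ 0), zero_mul, sub_zero,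
        show s + s = 2*s by ring, Real.mul_rpow (by norm_num) hs.le]
      linear_combination η * (3/2) * s^((2:ℝ)/3) * two_rpow_cancel
    have hGlim : Tendsto G (nhdsWithin 0 (Ioc 0 s)) (nhds (η * ((3/2) * s ^ ((2:ℝ)/3)))) := by
      rw [← hG0]
      exact (cG.tendsto 0).mono_left nhdsWithin_le_nhds
    filter_upwards [self_mem_nhdsWithin,
      (tendsto_arcosh hs).eventually (eventually_ge_atTop T),
      hGlim.eventually_const_lt haη] with t ht hRT hGt
    obtain ⟨ht0, hts⟩ := ht
    refine lt_of_lt_of_le hGt ?_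
    have h1 := int_lower hη0.le hT0 hRT hTpt
    have h2pos : (0:ℝ) ≤ (2:ℝ)^(-(1:ℝ)/3) * t^((2:ℝ)/3) :=
      mul_nonneg (Real.rpow_pos_of_pos two_pos _).le (Real.rpow_nonneg ht0.le _)
    calc G t = (2:ℝ)^(-(1:ℝ)/3) * t^((2:ℝ)/3) *
          (η * (2:ℝ)^(-(1:ℝ)/3) * ((3/2) * (Real.exp ((2/3) * arcosh (s/t)) - C))) := by
          show η * (3/2) * (2:ℝ)^(-(2:ℝ)/3) *
            ((s + Real.sqrt (s^2 - t^2)) ^ ((2:ℝ)/3) - t ^ ((2:ℝ)/3) * C) = _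
          rw [← t_exp_rpow ht0 hts, ← two_rpow_combine]
          ring
      _ ≤ (2:ℝ)^(-(1:ℝ)/3) * t^((2:ℝ)/3) * ∫ τ in (0:ℝ)..(arcosh (s/t)), ff τ :=
          mul_le_mul_of_nonneg_left h1 h2pos
  · -- upper bound
    intro b hb
    filter_upwards [self_mem_nhdsWithin] with t ht
    exact lt_of_le_of_lt (hub t ht) hb
end
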